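/- arXiv:2308.06091 — 3 statements merged into one kernel-verified Lean document; each statement's English description precedes it below -/
import Mathlib

section
/- Let a ∈ ℝ and b : Fin n → ℝ be finitely many real numbers, with M = max over j of b j, and suppose M > a. Then lim_{τ → 0⁺} τ · log(1 + ∑_{j} exp((b j - a)/τ)) = M - a. -/
/-!
Set `c₀ = 0` and `cⱼ = bⱼ - a`, so that the argument of the logarithm is the log-sum-exp
`∑ᵢ exp (cᵢ / τ)` over `n + 1` terms, whose largest exponent is `max 0 (M - a) = M - a`.
With `m = maxᵢ cᵢ` the sum lies between `exp (m / τ)` and `(n + 1) exp (m / τ)`, hence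
`m ≤ τ log ∑ᵢ exp (cᵢ / τ) ≤ m + τ log (n + 1)`, and the bounds squeeze to `m` as `τ → 0⁺`.
-/

open Filter Topology Finset

section LogSumExp

variable {ι : Type*} [Fintype ι] [Nonempty ι]

theorem exp_sup'_div_le_sum_exp_div (c : ι → ℝ) (τ : ℝ) :
    Real.exp (univ.sup' univ_nonempty c / τ) ≤ ∑ i, Real.exp (c i / τ) := by
  obtain ⟨i₀, -, hi₀⟩ := exists_mem_eq_sup' univ_nonempty c
  rw [hi₀]
  exact single_le_sum (f := fun i => Real.exp (c i / τ)) (fun i _ => (Real.exp_pos _).le)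
    (mem_univ i₀)

theorem sum_exp_div_le_card_mul_exp_sup'_div (c : ι → ℝ) {τ : ℝ} (hτ : 0 < τ) :
    ∑ i, Real.exp (c i / τ) ≤ Fintype.card ι * Real.exp (univ.sup' univ_nonempty c / τ) := by
  rw [← nsmul_eq_mul, ← card_univ]
  refine sum_le_card_nsmul _ _ _ fun i _ => ?_
  gcongr
  exact le_sup' c (mem_univ i)

theorem mul_log_sum_exp_div_mem_Icc (c : ι → ℝ) {τ : ℝ} (hτ : 0 < τ) :
    τ * Real.log (∑ i, Real.exp (c i / τ)) ∈
      Set.Icc (univ.sup' univ_nonempty c)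
        (univ.sup' univ_nonempty c + τ * Real.log (Fintype.card ι)) := by
  set m := univ.sup' univ_nonempty c
  have hlower := exp_sup'_div_le_sum_exp_div c τ
  have hupper := sum_exp_div_le_card_mul_exp_sup'_div c hτ
  have hcard : (0 : ℝ) < Fintype.card ι := by exact_mod_cast Fintype.card_pos
  constructor
  · calc m = τ * Real.log (Real.exp (m / τ)) := by rw [Real.log_exp, mul_div_cancel₀ _ hτ.ne']
      _ ≤ _ := mul_le_mul_of_nonneg_left (Real.log_le_log (Real.exp_pos _) hlower) hτ.le
  · calc τ * Real.log (∑ i, Real.exp (c i / τ))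
        ≤ τ * Real.log (Fintype.card ι * Real.exp (m / τ)) :=
          mul_le_mul_of_nonneg_left
            (Real.log_le_log ((Real.exp_pos _).trans_le hlower) hupper) hτ.le
      _ = m + τ * Real.log (Fintype.card ι) := by
          rw [Real.log_mul hcard.ne' (Real.exp_pos _).ne', Real.log_exp, mul_add,
            mul_div_cancel₀ _ hτ.ne', add_comm]

theorem tendsto_mul_log_sum_exp_div (c : ι → ℝ) :
    Tendsto (fun τ : ℝ => τ * Real.log (∑ i, Real.exp (c i / τ))) (𝓝[>] 0)
      (𝓝 (univ.sup' univ_nonempty c)) := by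
  have hupper : Tendsto (fun τ : ℝ => univ.sup' univ_nonempty c + τ * Real.log (Fintype.card ι))
      (𝓝[>] 0) (𝓝 (univ.sup' univ_nonempty c)) := by
    have : Continuous fun τ : ℝ => univ.sup' univ_nonempty c + τ * Real.log (Fintype.card ι) := by
      fun_prop
    simpa using (this.tendsto 0).mono_left nhdsWithin_le_nhds
  refine tendsto_of_tendsto_of_tendsto_of_le_of_le' tendsto_const_nhds hupper ?_ ?_ <;>
    filter_upwards [self_mem_nhdsWithin] with τ hτ
  exacts [(mul_log_sum_exp_div_mem_Icc c hτ).1, (mul_log_sum_exp_div_mem_Icc c hτ).2]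

end LogSumExp

theorem stmt_2 (n : ℕ) [NeZero n] (a : ℝ) (b : Fin n → ℝ)
    (hM : a < Finset.univ.sup' Finset.univ_nonempty b) :
    Tendsto (fun τ : ℝ => τ * Real.log (1 + ∑ j, Real.exp ((b j - a) / τ)))
      (nhdsWithin 0 (Set.Ioi 0))
      (nhds (Finset.univ.sup' Finset.univ_nonempty b - a)) := by
  let c : Option (Fin n) → ℝ := fun i => i.elim 0 (b · - a)
  have hsup : univ.sup' univ_nonempty c = univ.sup' univ_nonempty b - a := by
    obtain ⟨j₀, -, hj₀⟩ := exists_mem_eq_sup' univ_nonempty b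
    refine le_antisymm (sup'_le _ _ fun i _ => ?_) ?_
    · cases i with
      | none => exact (sub_pos.2 hM).le
      | some j => exact sub_le_sub_right (le_sup' b (mem_univ j)) a
    · exact hj₀ ▸ le_sup' c (mem_univ (some j₀))
  convert tendsto_mul_log_sum_exp_div c using 3 with τ
  · simp [c, Fintype.sum_option]
  · exact hsup.symm
end

section
/- Fix a ∈ ℝ, b : Fin n → ℝ with n ≥ 1. Then lim_{τ → ∞} τ · ( −log( exp(a/τ)/(exp(a/τ)+∑_{j=1}^n exp(b j/τ)) ) − log(n+1) ) = −a + (1/(n+1))·(a + ∑_j b j). -/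
open Filter Topology

theorem stmt_7 (n : ℕ) (hn : 1 ≤ n) (a : ℝ) (b : Fin n → ℝ) :
    Tendsto (fun τ : ℝ => τ *
        (-Real.log (Real.exp (a / τ) / (Real.exp (a / τ) + ∑ j, Real.exp (b j / τ)))
          - Real.log (n + 1)))
      atTop (nhds (-a + (1 / ((n : ℝ) + 1)) * (a + ∑ j, b j))) := by
  set g : ℝ → ℝ := fun t => Real.log (Real.exp (a * t) + ∑ j, Real.exp (b j * t)) with hgdef
  have hpos : ∀ t : ℝ, 0 < Real.exp (a * t) + ∑ j, Real.exp (b j * t) := by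
    intro t
    have h0 : (0:ℝ) ≤ ∑ j, Real.exp (b j * t) :=
      Finset.sum_nonneg fun j _ => (Real.exp_pos _).le
    have := Real.exp_pos (a * t)
    linarith
  have hg0 : g 0 = Real.log ((n : ℝ) + 1) := by
    simp [hgdef, mul_zero, Real.exp_zero, Finset.sum_const, Finset.card_univ, add_comm]
  have hexpd : ∀ c : ℝ, HasDerivAt (fun t : ℝ => Real.exp (c * t)) c 0 := by
    intro c
    have := ((hasDerivAt_id (0:ℝ)).const_mul c).exp
    simpa using this
  have hsumd : HasDerivAt (fun t : ℝ => ∑ j, Real.exp (b j * t)) (∑ j, b j) 0 := by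
    have := HasDerivAt.fun_sum (u := Finset.univ)
      (A := fun j t => Real.exp (b j * t)) (A' := fun j => b j) (x := (0:ℝ))
      (fun j _ => hexpd (b j))
    simpa using this
  have hd : HasDerivAt (fun t : ℝ => Real.exp (a * t) + ∑ j, Real.exp (b j * t))
      (a + ∑ j, b j) 0 := (hexpd a).add hsumd
  have hgd : HasDerivAt g ((a + ∑ j, b j) / ((n : ℝ) + 1)) 0 := by
    have := hd.log (hpos 0).ne'
    convert this using 1
    simp [mul_zero, Real.exp_zero, Finset.sum_const, Finset.card_univ, add_comm]
  have hslope := hasDerivAt_iff_tendsto_slope.mp hgd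
  have hinv : Tendsto (fun τ : ℝ => τ⁻¹) atTop (𝓝[≠] (0:ℝ)) :=
    tendsto_inv_atTop_nhdsGT_zero.mono_right
      (nhdsWithin_mono _ (fun x hx => ne_of_gt hx))
  have hcomp : Tendsto (fun τ : ℝ => slope g 0 τ⁻¹ - a) atTop
      (𝓝 ((a + ∑ j, b j) / ((n : ℝ) + 1) - a)) := (hslope.comp hinv).sub_const a
  have hval : (a + ∑ j, b j) / ((n : ℝ) + 1) - a
      = -a + (1 / ((n : ℝ) + 1)) * (a + ∑ j, b j) := by ring
  rw [hval] at hcomp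
  refine hcomp.congr' ?_
  filter_upwards [eventually_gt_atTop (0:ℝ)] with τ hτ
  have hτ' : τ ≠ 0 := ne_of_gt hτ
  have hS : (0:ℝ) < Real.exp (a / τ) + ∑ j, Real.exp (b j / τ) := by
    have := hpos τ⁻¹
    simpa [div_eq_mul_inv] using this
  have hlog : Real.log (Real.exp (a / τ) / (Real.exp (a / τ) + ∑ j, Real.exp (b j / τ)))
      = a / τ - Real.log (Real.exp (a / τ) + ∑ j, Real.exp (b j / τ)) := by
    rw [Real.log_div (Real.exp_ne_zero _) hS.ne', Real.log_exp]
  have hgτ : g τ⁻¹ = Real.log (Real.exp (a / τ) + ∑ j, Real.exp (b j / τ)) := by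
    simp [hgdef, div_eq_mul_inv]
  have hslopeval : slope g 0 τ⁻¹
      = (Real.log (Real.exp (a / τ) + ∑ j, Real.exp (b j / τ)) - Real.log ((n:ℝ) + 1)) * τ := by
    rw [slope_def_field, hg0, hgτ]
    field_simp
    ring
  rw [hslopeval, hlog]
  field_simp
  ring
end

section
/- For n ≥ 1 and reals a, b₁,…,bₙ all bounded in absolute value by B, and τ ≥ max(1, 2B), the SSM loss L(τ) = −log( exp(a/τ)/(exp(a/τ) + ∑_j exp(b_j/τ)) ) satisfies |L(τ) − log(n+1) − ( −a/τ + (1/((n+1)τ))(a + ∑_j b_j) )| ≤ C/τ² for some constant C depending only on n and B. -/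
/-! With `y_i = x_i / τ`, where `x = (a, b₁, …, bₙ)`, the loss is `log ∑ exp y_i - y_0`,
so the claim is the second-order expansion of log-sum-exp near the origin:
`∑ exp y_i = N (1 + u)` with `u = mean y + O(δ²)` and `|u| = O(δ)`, where `δ = B / τ ≤ 1/2`
bounds every `|y_i|`; then `log (1 + u) = u + O(u²)`. -/

open Real Finset

lemma abs_log_one_add_sub_self_le {u : ℝ} (h : |u| < 1) :
    |log (1 + u) - u| ≤ |u| ^ 2 / (1 - |u|) := by
  have h' := abs_log_sub_add_sum_range_le (x := -u) (by rwa [abs_neg]) 1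
  simp only [range_one, sum_singleton, zero_add, pow_one, Nat.cast_zero, div_one, abs_neg,
    sub_neg_eq_add] at h'
  rwa [show log (1 + u) - u = -u + log (1 + u) by ring]

section MeanExp

variable {ι : Type*} [Fintype ι] [Nonempty ι] {y : ι → ℝ} {δ : ℝ}

lemma abs_mean_le (hy : ∀ i, |y i| ≤ δ) : |(∑ i, y i) / Fintype.card ι| ≤ δ := by
  have hN : (0 : ℝ) < Fintype.card ι := by exact_mod_cast Fintype.card_pos
  rw [abs_div, Nat.abs_cast, div_le_iff₀ hN]
  calc |∑ i, y i| ≤ ∑ i, |y i| := abs_sum_le_sum_abs _ _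
    _ ≤ ∑ _i : ι, δ := sum_le_sum fun i _ => hy i
    _ = δ * Fintype.card ι := by rw [sum_const, card_univ, nsmul_eq_mul, mul_comm]

lemma abs_mean_exp_sub_one_sub_mean_le (hδ : δ ≤ 1) (hy : ∀ i, |y i| ≤ δ) :
    |(∑ i, exp (y i)) / Fintype.card ι - 1 - (∑ i, y i) / Fintype.card ι| ≤ δ ^ 2 := by
  have hN : (Fintype.card ι : ℝ) ≠ 0 := by exact_mod_cast Fintype.card_ne_zero
  have hmean : (∑ i, exp (y i)) / Fintype.card ι - 1 - (∑ i, y i) / Fintype.card ι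
      = (∑ i, (exp (y i) - 1 - y i)) / Fintype.card ι := by
    simp only [sum_sub_distrib, sum_const, card_univ, nsmul_eq_mul, mul_one]
    field_simp
  have hterm : ∀ i, |exp (y i) - 1 - y i| ≤ δ ^ 2 := fun i =>
    calc |exp (y i) - 1 - y i| ≤ y i ^ 2 := abs_exp_sub_one_sub_id_le ((hy i).trans hδ)
      _ = |y i| ^ 2 := (sq_abs _).symm
      _ ≤ δ ^ 2 := pow_le_pow_left₀ (abs_nonneg _) (hy i) 2
  rw [hmean]
  exact abs_mean_le hterm

theorem abs_log_sum_exp_sub_log_card_sub_mean_le (hδ : δ ≤ 1 / 2) (hy : ∀ i, |y i| ≤ δ) :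
    |log (∑ i, exp (y i)) - log (Fintype.card ι) - (∑ i, y i) / Fintype.card ι|
      ≤ 10 * δ ^ 2 := by
  have hN : (0 : ℝ) < Fintype.card ι := by exact_mod_cast Fintype.card_pos
  set m := (∑ i, y i) / Fintype.card ι
  set u := (∑ i, exp (y i)) / Fintype.card ι - 1
  have hum : |u - m| ≤ δ ^ 2 := abs_mean_exp_sub_one_sub_mean_le (by linarith) hy
  have hm : |m| ≤ δ := abs_mean_le hy
  have hδ0 : 0 ≤ δ := (abs_nonneg m).trans hm
  have hu : |u| ≤ 3 / 2 * δ := by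
    have := abs_sub_abs_le_abs_sub u m
    nlinarith
  have hlogu : |log (1 + u) - u| ≤ 9 * δ ^ 2 :=
    calc |log (1 + u) - u| ≤ |u| ^ 2 / (1 - |u|) := abs_log_one_add_sub_self_le (by linarith)
      _ ≤ |u| ^ 2 / (1 / 4) := by gcongr; linarith
      _ ≤ (3 / 2 * δ) ^ 2 / (1 / 4) := by gcongr
      _ = 9 * δ ^ 2 := by ring
  have hsplit :
      log (∑ i, exp (y i)) - log (Fintype.card ι) - m = (log (1 + u) - u) + (u - m) := by
    rw [← log_div (sum_pos (fun i _ => exp_pos (y i)) univ_nonempty).ne' hN.ne']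
    simp only [u]
    ring_nf
  calc |log (∑ i, exp (y i)) - log (Fintype.card ι) - m|
      ≤ |log (1 + u) - u| + |u - m| := hsplit ▸ abs_add_le _ _
    _ ≤ 9 * δ ^ 2 + δ ^ 2 := add_le_add hlogu hum
    _ = 10 * δ ^ 2 := by ring

end MeanExp

theorem stmt_16_general (n : ℕ) (B : ℝ) :
    ∃ C : ℝ, ∀ (a : ℝ) (b : Fin n → ℝ), |a| ≤ B → (∀ j, |b j| ≤ B) →
      ∀ τ : ℝ, max 1 (2 * B) ≤ τ →
        |(-Real.log (Real.exp (a / τ) / (Real.exp (a / τ) + ∑ j, Real.exp (b j / τ))))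
            - Real.log (n + 1)
            - (-(a / τ) + (1 / (((n : ℝ) + 1) * τ)) * (a + ∑ j, b j))|
          ≤ C / τ ^ 2 := by
  refine ⟨10 * B ^ 2, fun a b ha hb τ hτ => ?_⟩
  have hτ0 : 0 < τ := one_pos.trans_le ((le_max_left _ _).trans hτ)
  let y : Fin (n + 1) → ℝ := fun i => (Fin.cons a b : Fin (n + 1) → ℝ) i / τ
  have hy : ∀ i, |y i| ≤ B / τ := fun i => by
    rw [abs_div, abs_of_pos hτ0]
    gcongr
    cases i using Fin.cases with
    | zero => exact ha
    | succ j => exact hb j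
  have hδ : B / τ ≤ 1 / 2 := by
    rw [div_le_iff₀ hτ0]; linarith [(le_max_right _ _).trans hτ]
  have key := abs_log_sum_exp_sub_log_card_sub_mean_le hδ hy
  simp only [y, Fin.sum_univ_succ, Fin.cons_zero, Fin.cons_succ, Fintype.card_fin,
    Nat.cast_add, Nat.cast_one, ← sum_div] at key
  have hS : 0 < exp (a / τ) + ∑ j, exp (b j / τ) := by positivity
  rw [log_div (exp_ne_zero _) hS.ne', log_exp]
  convert key using 2
  · field_simp
    ring
  · rw [div_pow]; ring

theorem stmt_16 (n : ℕ) (hn : 1 ≤ n) (B : ℝ) :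
    ∃ C : ℝ, ∀ (a : ℝ) (b : Fin n → ℝ), |a| ≤ B → (∀ j, |b j| ≤ B) →
      ∀ τ : ℝ, max 1 (2 * B) ≤ τ →
        |(-Real.log (Real.exp (a / τ) / (Real.exp (a / τ) + ∑ j, Real.exp (b j / τ))))
            - Real.log (n + 1)
            - (-(a / τ) + (1 / (((n : ℝ) + 1) * τ)) * (a + ∑ j, b j))|
          ≤ C / τ ^ 2 :=
  stmt_16_general n B
end
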